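/- arXiv:2510.11051 — 2 statements merged into one kernel-verified Lean document; each statement's English description precedes it below -/
import Mathlib

section
/- The 12 rank-one decomposition of det₄ is valid: det₄ = (1/2)[(e₁−e₂)⊗(e₃−e₄)⊗(e₃+e₄)⊗(e₁+e₂) − (e₁−e₃)⊗(e₂−e₄)⊗(e₂+e₄)⊗(e₁+e₃) + (e₁−e₄)⊗(e₂−e₃)⊗(e₂+e₃)⊗(e₁+e₄) + (e₂−e₃)⊗(e₁−e₄)⊗(e₁+e₄)⊗(e₂+e₃) − (e₂−e₄)⊗(e₁−e₃)⊗(e₁+e₃)⊗(e₂+e₄) + (e₃−e₄)⊗(e₁−e₂)⊗(e₁+e₂)⊗(e₃+e₄) + (e₁+e₂)⊗(e₃+e₄)⊗(e₃−e₄)⊗(e₁−e₂) − (e₁+e₃)⊗(e₂+e₄)⊗(e₂−e₄)⊗(e₁−e₃) + (e₁+e₄)⊗(e₂+e₃)⊗(e₂−e₃)⊗(e₁−e₄) + (e₂+e₃)⊗(e₁+e₄)⊗(e₁−e₄)⊗(e₂−e₃) − (e₂+e₄)⊗(e₁+e₃)⊗(e₁−e₃)⊗(e₂−e₄) + (e₃+e₄)⊗(e₁+e₂)⊗(e₁−e₂)⊗(e₃−e₄)].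 In particular, the tensor rank of det₄ is at most 12. -/
open scoped BigOperators

/-- The `4×4` determinant tensor in coordinates. -/
noncomputable def det4 : Fin 4 → Fin 4 → Fin 4 → Fin 4 → ℂ := fun i j k l =>
  ∑ σ : Equiv.Perm (Fin 4),
    if σ 0 = i ∧ σ 1 = j ∧ σ 2 = k ∧ σ 3 = l then ((Equiv.Perm.sign σ : ℤ) : ℂ) else 0

/-- Coordinates of `e_a + e_b`. -/
def eP (a b : Fin 4) : Fin 4 → ℂ := fun i =>
  (if i = a then 1 else 0) + (if i = b then 1 else 0)

/-- Coordinates of `e_a − e_b`. -/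
def eM (a b : Fin 4) : Fin 4 → ℂ := fun i =>
  (if i = a then 1 else 0) - (if i = b then 1 else 0)

/-- Integer version of `det4`. -/
def det4Z : Fin 4 → Fin 4 → Fin 4 → Fin 4 → ℤ := fun i j k l =>
  ∑ σ : Equiv.Perm (Fin 4),
    if σ 0 = i ∧ σ 1 = j ∧ σ 2 = k ∧ σ 3 = l then (Equiv.Perm.sign σ : ℤ) else 0

/-- Integer version of `eP`. -/
def ePZ (a b : Fin 4) : Fin 4 → ℤ := fun i =>
  (if i = a then 1 else 0) + (if i = b then 1 else 0)

/-- Integer version of `eM`. -/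
def eMZ (a b : Fin 4) : Fin 4 → ℤ := fun i =>
  (if i = a then 1 else 0) - (if i = b then 1 else 0)

theorem keyZ : ∀ i j k l : Fin 4, 2 * det4Z i j k l =
      ( eMZ 0 1 i * eMZ 2 3 j * ePZ 2 3 k * ePZ 0 1 l
      - eMZ 0 2 i * eMZ 1 3 j * ePZ 1 3 k * ePZ 0 2 l
      + eMZ 0 3 i * eMZ 1 2 j * ePZ 1 2 k * ePZ 0 3 l
      + eMZ 1 2 i * eMZ 0 3 j * ePZ 0 3 k * ePZ 1 2 l
      - eMZ 1 3 i * eMZ 0 2 j * ePZ 0 2 k * ePZ 1 3 l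
      + eMZ 2 3 i * eMZ 0 1 j * ePZ 0 1 k * ePZ 2 3 l
      + ePZ 0 1 i * ePZ 2 3 j * eMZ 2 3 k * eMZ 0 1 l
      - ePZ 0 2 i * ePZ 1 3 j * eMZ 1 3 k * eMZ 0 2 l
      + ePZ 0 3 i * ePZ 1 2 j * eMZ 1 2 k * eMZ 0 3 l
      + ePZ 1 2 i * ePZ 0 3 j * eMZ 0 3 k * eMZ 1 2 l
      - ePZ 1 3 i * ePZ 0 2 j * eMZ 0 2 k * eMZ 1 3 l
      + ePZ 2 3 i * ePZ 0 1 j * eMZ 0 1 k * eMZ 2 3 l ) := by decide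

theorem det4_cast (i j k l : Fin 4) : det4 i j k l = ((det4Z i j k l : ℤ) : ℂ) := by
  simp [det4, det4Z, Int.cast_sum, apply_ite (Int.cast : ℤ → ℂ)]

theorem eP_cast (a b i : Fin 4) : eP a b i = ((ePZ a b i : ℤ) : ℂ) := by
  simp [eP, ePZ, apply_ite (Int.cast : ℤ → ℂ)]

theorem eM_cast (a b i : Fin 4) : eM a b i = ((eMZ a b i : ℤ) : ℂ) := by
  simp [eM, eMZ, apply_ite (Int.cast : ℤ → ℂ)]

/-- The explicit 12-term rank-one decomposition of `det₄`; in particular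
`R(det₄) ≤ 12`. -/
theorem det4_twelve_term_decomposition :
    (det4 = fun (i j k l : Fin 4) => (1/2 : ℂ) *
      ( eM 0 1 i * eM 2 3 j * eP 2 3 k * eP 0 1 l
      - eM 0 2 i * eM 1 3 j * eP 1 3 k * eP 0 2 l
      + eM 0 3 i * eM 1 2 j * eP 1 2 k * eP 0 3 l
      + eM 1 2 i * eM 0 3 j * eP 0 3 k * eP 1 2 l
      - eM 1 3 i * eM 0 2 j * eP 0 2 k * eP 1 3 l
      + eM 2 3 i * eM 0 1 j * eP 0 1 k * eP 2 3 l
      + eP 0 1 i * eP 2 3 j * eM 2 3 k * eM 0 1 l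
      - eP 0 2 i * eP 1 3 j * eM 1 3 k * eM 0 2 l
      + eP 0 3 i * eP 1 2 j * eM 1 2 k * eM 0 3 l
      + eP 1 2 i * eP 0 3 j * eM 0 3 k * eM 1 2 l
      - eP 1 3 i * eP 0 2 j * eM 0 2 k * eM 1 3 l
      + eP 2 3 i * eP 0 1 j * eM 0 1 k * eM 2 3 l )) ∧
    (∃ a b c d : Fin 12 → Fin 4 → ℂ,
      det4 = fun (i j k l : Fin 4) => ∑ m, a m i * b m j * c m k * d m l) := by
  have h : det4 = fun (i j k l : Fin 4) => (1/2 : ℂ) *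
      ( eM 0 1 i * eM 2 3 j * eP 2 3 k * eP 0 1 l
      - eM 0 2 i * eM 1 3 j * eP 1 3 k * eP 0 2 l
      + eM 0 3 i * eM 1 2 j * eP 1 2 k * eP 0 3 l
      + eM 1 2 i * eM 0 3 j * eP 0 3 k * eP 1 2 l
      - eM 1 3 i * eM 0 2 j * eP 0 2 k * eP 1 3 l
      + eM 2 3 i * eM 0 1 j * eP 0 1 k * eP 2 3 l
      + eP 0 1 i * eP 2 3 j * eM 2 3 k * eM 0 1 l
      - eP 0 2 i * eP 1 3 j * eM 1 3 k * eM 0 2 l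
      + eP 0 3 i * eP 1 2 j * eM 1 2 k * eM 0 3 l
      + eP 1 2 i * eP 0 3 j * eM 0 3 k * eM 1 2 l
      - eP 1 3 i * eP 0 2 j * eM 0 2 k * eM 1 3 l
      + eP 2 3 i * eP 0 1 j * eM 0 1 k * eM 2 3 l ) := by
    funext i j k l
    have hZ := keyZ i j k l
    have hC : (2 : ℂ) * det4 i j k l =
      ( eM 0 1 i * eM 2 3 j * eP 2 3 k * eP 0 1 l
      - eM 0 2 i * eM 1 3 j * eP 1 3 k * eP 0 2 l
      + eM 0 3 i * eM 1 2 j * eP 1 2 k * eP 0 3 l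
      + eM 1 2 i * eM 0 3 j * eP 0 3 k * eP 1 2 l
      - eM 1 3 i * eM 0 2 j * eP 0 2 k * eP 1 3 l
      + eM 2 3 i * eM 0 1 j * eP 0 1 k * eP 2 3 l
      + eP 0 1 i * eP 2 3 j * eM 2 3 k * eM 0 1 l
      - eP 0 2 i * eP 1 3 j * eM 1 3 k * eM 0 2 l
      + eP 0 3 i * eP 1 2 j * eM 1 2 k * eM 0 3 l
      + eP 1 2 i * eP 0 3 j * eM 0 3 k * eM 1 2 l
      - eP 1 3 i * eP 0 2 j * eM 0 2 k * eM 1 3 l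
      + eP 2 3 i * eP 0 1 j * eM 0 1 k * eM 2 3 l ) := by
      simp only [det4_cast, eP_cast, eM_cast]
      exact_mod_cast congrArg (Int.cast : ℤ → ℂ) hZ
    linear_combination hC / 2
  refine ⟨h, ?_⟩
  refine ⟨![ (1/2 : ℂ) • eM 0 1, -(1/2 : ℂ) • eM 0 2, (1/2 : ℂ) • eM 0 3,
             (1/2 : ℂ) • eM 1 2, -(1/2 : ℂ) • eM 1 3, (1/2 : ℂ) • eM 2 3,
             (1/2 : ℂ) • eP 0 1, -(1/2 : ℂ) • eP 0 2, (1/2 : ℂ) • eP 0 3,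
             (1/2 : ℂ) • eP 1 2, -(1/2 : ℂ) • eP 1 3, (1/2 : ℂ) • eP 2 3],
          ![eM 2 3, eM 1 3, eM 1 2, eM 0 3, eM 0 2, eM 0 1,
            eP 2 3, eP 1 3, eP 1 2, eP 0 3, eP 0 2, eP 0 1],
          ![eP 2 3, eP 1 3, eP 1 2, eP 0 3, eP 0 2, eP 0 1,
            eM 2 3, eM 1 3, eM 1 2, eM 0 3, eM 0 2, eM 0 1],
          ![eP 0 1, eP 0 2, eP 0 3, eP 1 2, eP 1 3, eP 2 3,
            eM 0 1, eM 0 2, eM 0 3, eM 1 2, eM 1 3, eM 2 3], ?_⟩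
  rw [h]
  funext i j k l
  simp only [Fin.sum_univ_succ, Finset.sum_empty, Fin.sum_univ_zero,
    Matrix.cons_val_zero, Matrix.cons_val_succ, Pi.smul_apply, Pi.neg_apply, smul_eq_mul]
  ring
end

section
/- Neither of the two 2-dimensional 𝔟-fixed subspaces F = span{x₁², x₁∧x₂} and F = span{x₁², x₁x₂} of (ℂ²)*⊗(ℂ²)* (identified with bilinear forms on ℂ²×ℂ²) has a zero locus in ℙ¹×ℙ¹ consisting of two distinct points: in each case the common zero locus of F in ℙ¹×ℙ¹ is a single point. Consequently, no rank-2 decomposition of det₂ into rank-one tensors has its corresponding ideal of points Borel-fixed. -/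
open scoped BigOperators

/-- The `2×2` determinant tensor `det₂ = e₁⊗e₂ − e₂⊗e₁` in coordinates. -/
def det2 : Fin 2 → Fin 2 → ℂ := fun i j =>
  if i = 0 ∧ j = 1 then 1 else if i = 1 ∧ j = 0 then -1 else 0

/-- Evaluation of a bilinear form `f ∈ (ℂ²)*⊗(ℂ²)*` (coordinates) at a pair of vectors. -/
noncomputable def evalForm (f : Fin 2 → Fin 2 → ℂ) (v w : Fin 2 → ℂ) : ℂ :=
  ∑ i, ∑ j, f i j * v i * w j

/-- The form `x₁² = x₁⊗x₁`. -/
def x11 : Fin 2 → Fin 2 → ℂ := fun i j => if i = 0 ∧ j = 0 then 1 else 0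

/-- The form `x₁∧x₂ = x₁⊗x₂ − x₂⊗x₁`. -/
def xWedge : Fin 2 → Fin 2 → ℂ := fun i j =>
  (if i = 0 ∧ j = 1 then 1 else 0) - (if i = 1 ∧ j = 0 then 1 else 0)

/-- The form `x₁x₂ = x₁⊗x₂ + x₂⊗x₁` (a nonzero multiple of the symmetric product). -/
def xSym : Fin 2 → Fin 2 → ℂ := fun i j =>
  (if i = 0 ∧ j = 1 then 1 else 0) + (if i = 1 ∧ j = 0 then 1 else 0)

/-- The dual (contragredient) derivation action of `X ∈ 𝔤𝔩₂` on bilinear forms: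
`(X·f)(v,w) = −f(Xv,w) − f(v,Xw)`. -/
noncomputable def dualAct (X : Matrix (Fin 2) (Fin 2) ℂ) (f : Fin 2 → Fin 2 → ℂ) :
    Fin 2 → Fin 2 → ℂ :=
  fun i j => -(∑ a, X a i * f a j) - (∑ a, X a j * f i a)

lemma evalForm_expand (f : Fin 2 → Fin 2 → ℂ) (v w : Fin 2 → ℂ) :
    evalForm f v w = f 0 0 * v 0 * w 0 + f 0 1 * v 0 * w 1
      + f 1 0 * v 1 * w 0 + f 1 1 * v 1 * w 1 := by
  simp [evalForm, Fin.sum_univ_two]; ring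

lemma vec_ne_zero {v : Fin 2 → ℂ} (h : v ≠ 0) : v 0 ≠ 0 ∨ v 1 ≠ 0 := by
  by_contra hc
  push_neg at hc
  exact h (funext fun i => by fin_cases i <;> simp [hc.1, hc.2])

lemma point_aux {v w : Fin 2 → ℂ} (hv : v ≠ 0) (hw : w ≠ 0) {c : ℂ} (hc : c ≠ 0)
    (h1 : v 0 = 0 ∨ w 0 = 0) (h2 : v 0 * w 1 = c * (v 1 * w 0)) :
    v 0 = 0 ∧ w 0 = 0 := by
  by_cases hv0 : v 0 = 0
  · refine ⟨hv0, ?_⟩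
    have hv1 : v 1 ≠ 0 := (vec_ne_zero hv).resolve_left (by simpa using hv0)
    have : c * (v 1 * w 0) = 0 := by rw [← h2, hv0, zero_mul]
    have := (mul_eq_zero.mp this).resolve_left hc
    exact (mul_eq_zero.mp this).resolve_left hv1
  · exfalso
    have hw0 : w 0 = 0 := h1.resolve_left hv0
    have : v 0 * w 1 = 0 := by rw [h2, hw0, mul_zero, mul_zero]
    have hw1 : w 1 = 0 := (mul_eq_zero.mp this).resolve_left hv0
    exact (vec_ne_zero hw).elim (fun h => h hw0) (fun h => h hw1)

/-- Each of the two `2`-dimensional Borel-fixed subspaces `span{x₁², x₁∧x₂}` and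
`span{x₁², x₁x₂}` of `(ℂ²)*⊗(ℂ²)*` has zero locus in `ℙ¹×ℙ¹` equal to the single point
`([e₂],[e₂])`; consequently no rank-`2` decomposition of `det₂` into rank-one tensors has
its corresponding ideal of points Borel-fixed. -/
theorem borel_fixed_candidate_zero_loci :
    (∀ v w : Fin 2 → ℂ, v ≠ 0 → w ≠ 0 →
      ((∀ f ∈ Submodule.span ℂ ({x11, xWedge} : Set (Fin 2 → Fin 2 → ℂ)),
          evalForm f v w = 0) ↔ (v 0 = 0 ∧ w 0 = 0))) ∧
    (∀ v w : Fin 2 → ℂ, v ≠ 0 → w ≠ 0 →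
      ((∀ f ∈ Submodule.span ℂ ({x11, xSym} : Set (Fin 2 → Fin 2 → ℂ)),
          evalForm f v w = 0) ↔ (v 0 = 0 ∧ w 0 = 0))) ∧
    ¬ ∃ v w v' w' : Fin 2 → ℂ, v ≠ 0 ∧ w ≠ 0 ∧ v' ≠ 0 ∧ w' ≠ 0 ∧
      (det2 = fun i j => v i * w j + v' i * w' j) ∧
      (∀ X : Matrix (Fin 2) (Fin 2) ℂ, (∀ i j : Fin 2, j < i → X i j = 0) →
        Matrix.trace X = 0 → ∀ f : Fin 2 → Fin 2 → ℂ,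
          (evalForm f v w = 0 ∧ evalForm f v' w' = 0) →
          (evalForm (dualAct X f) v w = 0 ∧ evalForm (dualAct X f) v' w' = 0)) := by
  refine ⟨?_, ?_, ?_⟩
  · intro v w hv hw
    constructor
    · intro h
      have h1 := h x11 (Submodule.subset_span (Set.mem_insert _ _))
      have h2 := h xWedge (Submodule.subset_span (Set.mem_insert_of_mem _ rfl))
      rw [evalForm_expand] at h1 h2
      simp only [x11, xWedge] at h1 h2
      norm_num at h1 h2
      exact point_aux hv hw one_ne_zero h1 (by linear_combination h2)
    · rintro ⟨hv0, hw0⟩ f hf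
      rw [Submodule.mem_span_pair] at hf
      obtain ⟨a, b, rfl⟩ := hf
      rw [evalForm_expand]
      simp [x11, xWedge, hv0, hw0]
  · intro v w hv hw
    constructor
    · intro h
      have h1 := h x11 (Submodule.subset_span (Set.mem_insert _ _))
      have h2 := h xSym (Submodule.subset_span (Set.mem_insert_of_mem _ rfl))
      rw [evalForm_expand] at h1 h2
      simp only [x11, xSym] at h1 h2
      norm_num at h1 h2
      exact point_aux hv hw (neg_ne_zero.mpr one_ne_zero) h1 (by linear_combination h2)
    · rintro ⟨hv0, hw0⟩ f hf
      rw [Submodule.mem_span_pair] at hf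
      obtain ⟨a, b, rfl⟩ := hf
      rw [evalForm_expand]
      simp [x11, xSym, hv0, hw0]
  · rintro ⟨v, w, v', w', hv, hw, hv', hw', hM, hB⟩
    have hP := congrFun (congrFun hM 0) 0
    have hQ := congrFun (congrFun hM 0) 1
    have hR := congrFun (congrFun hM 1) 0
    have hS := congrFun (congrFun hM 1) 1
    simp only [det2] at hP hQ hR hS
    norm_num at hP hQ hR hS
    -- hP : 0 = v0w0+v0'w0' etc (orientation to check)
    have hDE : (v 0 * v' 1 - v 1 * v' 0) * (w 0 * w' 1 - w 1 * w' 0) = 1 := by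
      linear_combination -(v 1 * w 1 + v' 1 * w' 1) * hP + (v 1 * w 0 + v' 1 * w' 0) * hQ + hR
    set N : Matrix (Fin 2) (Fin 2) ℂ := !![0, 1; 0, 0] with hN
    have hNlow : ∀ i j : Fin 2, j < i → N i j = 0 := by
      intro i j hij
      fin_cases i <;> fin_cases j <;> simp_all [hN]
    have hNtr : Matrix.trace N = 0 := by
      simp [Matrix.trace, Fin.sum_univ_two, hN]
    set f1 : Fin 2 → Fin 2 → ℂ :=
      fun i j => (if i = 0 then v 1 else -v 0) * (if j = 0 then w' 1 else -w' 0) with hf1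
    set f2 : Fin 2 → Fin 2 → ℂ :=
      fun i j => (if i = 0 then v' 1 else -v' 0) * (if j = 0 then w 1 else -w 0) with hf2
    have hf1mem : evalForm f1 v w = 0 ∧ evalForm f1 v' w' = 0 := by
      constructor <;> · rw [evalForm_expand]; simp [hf1]; ring
    have hf2mem : evalForm f2 v w = 0 ∧ evalForm f2 v' w' = 0 := by
      constructor <;> · rw [evalForm_expand]; simp [hf2]; ring
    have hc1 := (hB N hNlow hNtr f1 hf1mem).1
    have hc2 := (hB N hNlow hNtr f2 hf2mem).2
    rw [evalForm_expand] at hc1 hc2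
    simp only [dualAct, Fin.sum_univ_two, hf1, hf2, hN] at hc1 hc2
    norm_num [Matrix.cons_val', Matrix.cons_val_zero, Matrix.cons_val_one,
      Matrix.head_cons, Matrix.head_fin_const] at hc1 hc2
    -- hc1 should be equivalent to  v1^2 * E = 0, hc2 to v1'^2 * E = 0 (up to sign)
    have hv1 : v 1 = 0 := by
      have h : v 1 * v 1 = 0 := by
        linear_combination (-(v 1 * v 1)) * hDE - (v 0 * v' 1 - v 1 * v' 0) * hc1
      exact mul_self_eq_zero.mp h
    have hv1' : v' 1 = 0 := by
      have h : v' 1 * v' 1 = 0 := by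
        linear_combination (-(v' 1 * v' 1)) * hDE + (v 0 * v' 1 - v 1 * v' 0) * hc2
      exact mul_self_eq_zero.mp h
    rw [hv1, hv1'] at hR
    norm_num at hR
end
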